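/- Let f : ℝ → ℂ be continuous with |f(t)| ≤ M/((1+|t−s|)·log²(2+|t−s|)) for all t and some fixed s, M. Suppose g(t) = ∫ₛᵗ K(t−τ)f(τ)dτ where |K(u)| ≤ C|u|^{−(1−2/p)} for some p > 2. Then |g(t)| ≤ C'·|t−s|^{−(1−2/p)} for some constant C' depending only on C, M, p, i.e. sup_{t≠s} |t−s|^{1−2/p}|g(t)| < ∞. -/

import Mathlib

/-!
Put `r = |t - s|` and `α = 1 - 2/p ∈ [0, 1)`. On the half of the time interval next to `s` the
kernel is at most `(r/2)^{-α}`, while the source has total mass at most `2 / log 2`, because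
`-2 / log (2 + σ)` is an antiderivative of a majorant of `1 / ((1 + σ) log² (2 + σ))`. On the half
next to `t` the source is `O(1/r)` and the kernel integrates to `O(r^{1-α})`. Both halves are thus
`O(r^{-α})`; the case `t < s` reduces to `s < t` by the reflection `τ ↦ 2s - τ`.
-/

open Real MeasureTheory intervalIntegral Set

noncomputable def logWeight (r : ℝ) : ℝ := ((1 + r) * log (2 + r) ^ 2)⁻¹

lemma log_two_le_log_two_add {r : ℝ} (hr : 0 ≤ r) : log 2 ≤ log (2 + r) :=
  log_le_log two_pos (by linarith)

lemma log_two_add_pos {r : ℝ} (hr : 0 ≤ r) : 0 < log (2 + r) :=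
  (log_pos one_lt_two).trans_le (log_two_le_log_two_add hr)

lemma logWeight_nonneg {r : ℝ} (hr : 0 ≤ r) : 0 ≤ logWeight r :=
  inv_nonneg.2 (mul_nonneg (by linarith) (sq_nonneg _))

lemma continuousOn_logWeight : ContinuousOn logWeight (Ici 0) := by
  refine ContinuousOn.inv₀ ?_ fun r (hr : 0 ≤ r) =>
    mul_ne_zero (by linarith) (pow_pos (log_two_add_pos hr) 2).ne'
  refine (continuousOn_const.add continuousOn_id).mul (ContinuousOn.pow ?_ 2)
  exact (continuousOn_const.add continuousOn_id).log fun r (hr : 0 ≤ r) =>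
    (by simp only [id]; linarith : (0 : ℝ) < 2 + id r).ne'

lemma mul_logWeight_le {r : ℝ} (hr : 0 ≤ r) : r * logWeight r ≤ (log 2 ^ 2)⁻¹ := by
  have hL := log_two_le_log_two_add hr
  calc r * logWeight r = r / (1 + r) * (log (2 + r) ^ 2)⁻¹ := by
        rw [logWeight, mul_inv, ← mul_assoc, div_eq_mul_inv]
    _ ≤ 1 * (log 2 ^ 2)⁻¹ := by
        gcongr
        exact div_le_one_of_le₀ (by linarith) (by linarith)
    _ = (log 2 ^ 2)⁻¹ := one_mul _

lemma integral_logWeight_le {x : ℝ} (hx : 0 ≤ x) : ∫ r in 0..x, logWeight r ≤ 2 / log 2 := by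
  set G : ℝ → ℝ := fun r => -2 * (log (2 + r))⁻¹
  set G' : ℝ → ℝ := fun r => 2 / ((2 + r) * log (2 + r) ^ 2)
  have hG : ∀ r, 0 ≤ r → HasDerivAt G (G' r) r := by
    intro r hr
    have hlog : HasDerivAt (fun r => log (2 + r)) (1 / (2 + r)) r := by
      simpa using ((hasDerivAt_id r).const_add 2).log (by simp only [id]; linarith)
    refine ((hlog.inv (log_two_add_pos hr).ne').const_mul (-2)).congr_deriv ?_
    simp only [G']
    field_simp
  have hle : ∀ r, 0 ≤ r → logWeight r ≤ G' r := by
    intro r hr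
    have hL := pow_pos (log_two_add_pos hr) 2
    rw [logWeight, inv_eq_one_div, div_le_div_iff₀ (by positivity) (by positivity)]
    nlinarith
  calc ∫ r in 0..x, logWeight r ≤ G x - G 0 :=
        integral_le_sub_of_hasDeriv_right_of_le hx
          (fun r hr => (hG r hr.1).continuousAt.continuousWithinAt)
          (fun r hr => (hG r hr.1.le).hasDerivWithinAt)
          ((continuousOn_logWeight.mono Icc_subset_Ici_self).integrableOn_Icc)
          (fun r hr => hle r hr.1.le)
    _ ≤ 2 / log 2 := by
        have := inv_nonneg.2 (log_two_add_pos hx).le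
        simp only [G, add_zero]
        rw [div_eq_mul_inv]
        linarith

section Convolution

variable {α r : ℝ} {w : ℝ → ℝ}

lemma intervalIntegrable_rpow_sub (hα : α < 1) (a b : ℝ) :
    IntervalIntegrable (fun σ => (r - σ) ^ (-α)) volume a b := by
  simpa only [sub_sub_cancel] using
    (intervalIntegrable_rpow' (a := r - a) (b := r - b) (by linarith : -1 < -α)).comp_sub_left r

lemma intervalIntegrable_rpow_sub_mul (hα : α < 1) {a b : ℝ} (hw : ContinuousOn w (uIcc a b)) :
    IntervalIntegrable (fun σ => (r - σ) ^ (-α) * w σ) volume a b :=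
  (intervalIntegrable_rpow_sub hα a b).mul_continuousOn hw

lemma integral_rpow_sub_mul_le {A B : ℝ} (hα0 : 0 ≤ α) (hα1 : α < 1) (hr : 0 < r)
    (hw : ContinuousOn w (Icc 0 r)) (hw0 : ∀ σ ∈ Icc 0 r, 0 ≤ w σ)
    (hA : ∫ σ in 0..r / 2, w σ ≤ A) (hB : ∀ σ ∈ Icc (r / 2) r, σ * w σ ≤ B) :
    ∫ σ in 0..r, (r - σ) ^ (-α) * w σ ≤ (r / 2) ^ (-α) * (A + B / (1 - α)) := by
  have hint : ∀ a ∈ Icc 0 r, ∀ b ∈ Icc 0 r,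
      IntervalIntegrable (fun σ => (r - σ) ^ (-α) * w σ) volume a b := fun a ha b hb =>
    intervalIntegrable_rpow_sub_mul hα1 (hw.mono (uIcc_subset_Icc ha hb))
  have hmid : r / 2 ∈ Icc 0 r := ⟨by linarith, by linarith⟩
  have hr2 : 0 < r / 2 := by linarith
  rw [← integral_add_adjacent_intervals (hint 0 (left_mem_Icc.2 hr.le) _ hmid)
    (hint _ hmid r (right_mem_Icc.2 hr.le)), mul_add]
  have hnear : ∫ σ in 0..r / 2, (r - σ) ^ (-α) * w σ ≤ ∫ σ in 0..r / 2, (r / 2) ^ (-α) * w σ := by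
    refine integral_mono_on hr2.le (hint 0 (left_mem_Icc.2 hr.le) _ hmid)
      (((hw.mono (Icc_subset_Icc le_rfl hmid.2)).intervalIntegrable_of_Icc hr2.le).const_mul _)
      fun σ hσ => mul_le_mul_of_nonneg_right ?_ (hw0 σ ⟨hσ.1, hσ.2.trans hmid.2⟩)
    exact rpow_le_rpow_of_nonpos hr2 (by linarith [hσ.2]) (by linarith)
  have hfar :
      ∫ σ in r / 2..r, (r - σ) ^ (-α) * w σ ≤ ∫ σ in r / 2..r, (r - σ) ^ (-α) * (2 * B / r) := by
    refine integral_mono_on (by linarith) (hint _ hmid r (right_mem_Icc.2 hr.le))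
      ((intervalIntegrable_rpow_sub hα1 _ _).mul_const _)
      fun σ hσ => mul_le_mul_of_nonneg_left ?_ (rpow_nonneg (by linarith [hσ.2]) _)
    have := hw0 σ ⟨by linarith [hσ.1], hσ.2⟩
    rw [le_div_iff₀ hr]
    nlinarith [hB σ hσ, mul_nonneg (sub_nonneg.2 hσ.1) this]
  have hkernel : ∫ σ in r / 2..r, (r - σ) ^ (-α) = (r / 2) ^ (-α) * (r / 2) / (1 - α) := by
    rw [integral_comp_sub_left (fun σ => σ ^ (-α)), sub_self, sub_half,
      integral_rpow (Or.inl (by linarith)), zero_rpow (by linarith), rpow_add_one hr2.ne']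
    ring_nf
  refine add_le_add (hnear.trans ?_) (hfar.trans_eq ?_)
  · rw [intervalIntegral.integral_const_mul]
    exact mul_le_mul_of_nonneg_left hA (rpow_nonneg hr2.le _)
  · rw [intervalIntegral.integral_mul_const, hkernel]
    field_simp

end Convolution

lemma norm_integral_kernel_mul_le_of_lt {α s t M C : ℝ} {K f : ℝ → ℂ} (hα0 : 0 ≤ α)
    (hα1 : α < 1) (hK : ∀ u, ‖K u‖ ≤ C * |u| ^ (-α))
    (hf : ∀ τ, ‖f τ‖ ≤ M / ((1 + |τ - s|) * log (2 + |τ - s|) ^ 2)) (hst : s < t) :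
    ‖∫ τ in s..t, K (t - τ) * f τ‖ ≤
      C * M * 2 ^ α * (2 / log 2 + (log 2 ^ 2)⁻¹ / (1 - α)) * (t - s) ^ (-α) := by
  set r := t - s
  have hr : 0 < r := sub_pos.2 hst
  have hC : 0 ≤ C := by simpa using (norm_nonneg _).trans (hK 1)
  have hM : 0 ≤ M := by
    have := (norm_nonneg _).trans (hf s)
    simp only [sub_self, abs_zero, add_zero, one_mul] at this
    simpa only [zero_mul] using (le_div_iff₀ (pow_pos (log_pos one_lt_two) 2)).1 this
  have hw : ContinuousOn logWeight (Icc 0 r) := continuousOn_logWeight.mono Icc_subset_Ici_self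
  have hpt : ∀ σ ∈ Ioc 0 r,
      ‖K (t - (σ + s)) * f (σ + s)‖ ≤ C * M * ((r - σ) ^ (-α) * logWeight σ) := by
    intro σ hσ
    have hKσ := hK (t - (σ + s))
    rw [show t - (σ + s) = r - σ by ring] at hKσ ⊢
    rw [abs_of_nonneg (by linarith [hσ.2])] at hKσ
    have hfσ := hf (σ + s)
    rw [add_sub_cancel_right, abs_of_nonneg hσ.1.le, div_eq_mul_inv] at hfσ
    rw [norm_mul, mul_mul_mul_comm]
    exact mul_le_mul hKσ hfσ (norm_nonneg _) ((norm_nonneg _).trans hKσ)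
  calc ‖∫ τ in s..t, K (t - τ) * f τ‖ = ‖∫ σ in 0..r, K (t - (σ + s)) * f (σ + s)‖ := by
        rw [integral_comp_add_right (fun τ => K (t - τ) * f τ), zero_add, sub_add_cancel]
    _ ≤ ∫ σ in 0..r, C * M * ((r - σ) ^ (-α) * logWeight σ) :=
        norm_integral_le_of_norm_le hr.le (ae_of_all _ hpt)
          ((intervalIntegrable_rpow_sub_mul hα1 (by rwa [uIcc_of_le hr.le])).const_mul _)
    _ ≤ C * M * ((r / 2) ^ (-α) * (2 / log 2 + (log 2 ^ 2)⁻¹ / (1 - α))) := by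
        rw [intervalIntegral.integral_const_mul]
        refine mul_le_mul_of_nonneg_left ?_ (mul_nonneg hC hM)
        exact integral_rpow_sub_mul_le hα0 hα1 hr hw (fun σ hσ => logWeight_nonneg hσ.1)
          (integral_logWeight_le (by linarith)) fun σ hσ => mul_logWeight_le (by linarith [hσ.1])
    _ = C * M * 2 ^ α * (2 / log 2 + (log 2 ^ 2)⁻¹ / (1 - α)) * r ^ (-α) := by
        rw [div_rpow hr.le zero_le_two, rpow_neg zero_le_two, div_inv_eq_mul]
        ring

lemma integral_kernel_mul_reflect (K f : ℝ → ℂ) (s t : ℝ) :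
    ∫ τ in s..t, K (t - τ) * f τ =
      -∫ τ in s..2 * s - t, K (-(2 * s - t - τ)) * f (2 * s - τ) := by
  simp_rw [show ∀ τ, -(2 * s - t - τ) = t - (2 * s - τ) from fun τ => by ring]
  rw [integral_comp_sub_left (fun τ => K (t - τ) * f τ), sub_sub_cancel,
    show 2 * s - s = s by ring, integral_symm]

theorem stmt_19_general (p : ℝ) (hp : 2 < p) (s M C : ℝ)
    (f : ℝ → ℂ)
    (hfdec : ∀ t : ℝ, ‖f t‖ ≤ M / ((1 + |t - s|) * (Real.log (2 + |t - s|))^2))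
    (K : ℝ → ℂ)
    (hK : ∀ u : ℝ, ‖K u‖ ≤ C * |u| ^ (-(1 - 2/p)))
    (g : ℝ → ℂ) (hg : ∀ t : ℝ, g t = ∫ τ in s..t, K (t - τ) * f τ) :
    ∃ C' : ℝ, ∀ t : ℝ, t ≠ s → ‖g t‖ ≤ C' * |t - s| ^ (-(1 - 2/p)) := by
  have hα0 : 0 ≤ 1 - 2 / p := by
    rw [sub_nonneg, div_le_one (by linarith)]
    exact hp.le
  have hα1 : 1 - 2 / p < 1 := sub_lt_self 1 (div_pos two_pos (by linarith))
  refine ⟨C * M * 2 ^ (1 - 2 / p) * (2 / log 2 + (log 2 ^ 2)⁻¹ / (1 - (1 - 2 / p))),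
    fun t hts => ?_⟩
  rw [hg]
  rcases hts.lt_or_gt with hts | hst
  · have hK' (u : ℝ) : ‖K (-u)‖ ≤ C * |u| ^ (-(1 - 2 / p)) := by simpa only [abs_neg] using hK (-u)
    have hf' (τ : ℝ) : ‖f (2 * s - τ)‖ ≤ M / ((1 + |τ - s|) * log (2 + |τ - s|) ^ 2) := by
      simpa only [show 2 * s - τ - s = -(τ - s) by ring, abs_neg] using hfdec (2 * s - τ)
    rw [integral_kernel_mul_reflect, norm_neg, abs_of_neg (sub_neg.2 hts),
      show -(t - s) = 2 * s - t - s by ring]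
    exact norm_integral_kernel_mul_le_of_lt hα0 hα1 hK' hf' (by linarith)
  · rw [abs_of_pos (sub_pos.2 hst)]
    exact norm_integral_kernel_mul_le_of_lt hα0 hα1 hK hfdec hst

/-- Convolving a singular dispersive kernel `|u|^{-(1-2/p)}`, `p > 2`, against a source
decaying like `1/((1+|t-s|)log²(2+|t-s|))` yields the dispersive decay `|t-s|^{-(1-2/p)}`:
`sup_{t ≠ s} |t-s|^{1-2/p} |g(t)| < ∞` where `g(t) = ∫ₛᵗ K(t-τ) f(τ) dτ`. -/
theorem stmt_19 (p : ℝ) (hp : 2 < p) (s M C : ℝ)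
    (f : ℝ → ℂ) (hf : Continuous f)
    (hfdec : ∀ t : ℝ, ‖f t‖ ≤ M / ((1 + |t - s|) * (Real.log (2 + |t - s|))^2))
    (K : ℝ → ℂ) (hKmeas : Measurable K)
    (hK : ∀ u : ℝ, ‖K u‖ ≤ C * |u| ^ (-(1 - 2/p)))
    (g : ℝ → ℂ) (hg : ∀ t : ℝ, g t = ∫ τ in s..t, K (t - τ) * f τ) :
    ∃ C' : ℝ, ∀ t : ℝ, t ≠ s → ‖g t‖ ≤ C' * |t - s| ^ (-(1 - 2/p)) :=
  stmt_19_general p hp s M C f hfdec K hK g hg
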